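/- arXiv:1402.3520 — 3 statements merged into one kernel-verified Lean document; each statement's English description precedes it below -/
import Mathlib

section
/- Consider the single-variable DE recursion for a (l,r)-regular LDPC ensemble on the BEC with erasure probability ε: x_{I+1} = ε·(1 − (1−x_I)^{r−1})^{l−1}, x_1 = ε. Under symmetric conditions, the bilayer two-user DE recursion with initial values p^{(1)} = p̃^{(1)} = p^{(2)} = p̃^{(2)} = ε, first-layer degree (l,r) and second-layer degrees (l_synd, r/2), collapses to the single-layer recursion of the (l + l_synd, r)-ensemble: for all iterations I, p^{(i)}_I = p̃^{(i)}_I = x_I where x_{I+1} = ε·(1 − (1 − x_I)^{r−1})^{l + l_synd − 1}. (Uncoupled case, w = 1, single position.) -/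
/-- Under symmetric conditions, the two-user bilayer DE recursion (uncoupled,
w = 1) with r_synd = r/2 collapses to the single-layer recursion of the
(l + l_synd, r) ensemble. -/
theorem bilayer_DE_collapse
    (ε : ℝ) (hε0 : 0 ≤ ε) (hε1 : ε ≤ 1)
    (l lsynd r : ℕ) (hl : 1 ≤ l) (hls : 1 ≤ lsynd) (hr : 2 ≤ r) (hre : Even r)
    (p1 pt1 p2 pt2 x : ℕ → ℝ)
    (hp10 : p1 0 = ε) (hpt10 : pt1 0 = ε) (hp20 : p2 0 = ε) (hpt20 : pt2 0 = ε)
    (hp1 : ∀ I, p1 (I + 1) =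
      ε * (1 - (1 - p1 I) ^ (r - 1)) ^ (l - 1)
        * (1 - (1 - pt1 I) ^ (r / 2 - 1) * (1 - pt2 I) ^ (r / 2)) ^ lsynd)
    (hpt1 : ∀ I, pt1 (I + 1) =
      ε * (1 - (1 - p1 I) ^ (r - 1)) ^ l
        * (1 - (1 - pt1 I) ^ (r / 2 - 1) * (1 - pt2 I) ^ (r / 2)) ^ (lsynd - 1))
    (hp2 : ∀ I, p2 (I + 1) =
      ε * (1 - (1 - p2 I) ^ (r - 1)) ^ (l - 1)
        * (1 - (1 - pt2 I) ^ (r / 2 - 1) * (1 - pt1 I) ^ (r / 2)) ^ lsynd)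
    (hpt2 : ∀ I, pt2 (I + 1) =
      ε * (1 - (1 - p2 I) ^ (r - 1)) ^ l
        * (1 - (1 - pt2 I) ^ (r / 2 - 1) * (1 - pt1 I) ^ (r / 2)) ^ (lsynd - 1))
    (hx0 : x 0 = ε)
    (hx : ∀ I, x (I + 1) = ε * (1 - (1 - x I) ^ (r - 1)) ^ (l + lsynd - 1)) :
    ∀ I, p1 I = x I ∧ pt1 I = x I ∧ p2 I = x I ∧ pt2 I = x I := by
  have hr2 : r % 2 = 0 := Nat.even_iff.mp hre
  have hsum : r / 2 - 1 + r / 2 = r - 1 := by omega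
  have key : ∀ y : ℝ, (1 - y) ^ (r / 2 - 1) * (1 - y) ^ (r / 2) = (1 - y) ^ (r - 1) := by
    intro y; rw [← pow_add, hsum]
  have e1 : l - 1 + lsynd = l + lsynd - 1 := by omega
  have e2 : l + (lsynd - 1) = l + lsynd - 1 := by omega
  intro I
  induction I with
  | zero => simp [hp10, hpt10, hp20, hpt20, hx0]
  | succ n ih =>
    obtain ⟨h1, h2, h3, h4⟩ := ih
    refine ⟨?_, ?_, ?_, ?_⟩
    · rw [hp1, hx, h1, h2, h4, key, mul_assoc, ← pow_add, e1]
    · rw [hpt1, hx, h1, h2, h4, key, mul_assoc, ← pow_add, e2]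
    · rw [hp2, hx, h3, h2, h4, key, mul_assoc, ← pow_add, e1]
    · rw [hpt2, hx, h3, h2, h4, key, mul_assoc, ← pow_add, e2]
end

section
/- With the optimal time allocation of the correlated-source TD-MARC (θ1*, θ2* = κ'θ1*, θr* = 1−θ1*−θ2* with θ1* = C_rd/((1+κ')C_rd + (H12/Rs1)C_s1r − C_s1d − κ'C_s2d)), the constraint f3 ≥ f1 holds: (1/Rs1)(θ1*·C_s1d + θr*·C_rd) ≥ (1/Rs1)·θ1*·C_s1r, provided H12/Rs1 ≥ 1, C_s2r ≥ C_s2d > 0, and all capacities positive with the denominator of θ1* positive. -/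
/-- At the optimal allocation, the constraint f3 ≥ f1 is automatically satisfied:
(1/Rs1)(θ1·C_s1d + θr·C_rd) ≥ (1/Rs1)·θ1·C_s1r. -/
theorem f3_ge_f1
    (H12 Rs1 Cs1r Cs2r Cs1d Cs2d Crd : ℝ)
    (hH1 : 1 ≤ H12) (hH2 : H12 ≤ 2) (hRs1 : 0 < Rs1) (hRs1' : Rs1 ≤ 1)
    (h1 : 0 < Cs1r) (h2 : 0 < Cs2r) (h3 : 0 < Cs1d) (h4 : 0 < Cs2d) (h5 : 0 < Crd)
    (hb : Cs2d ≤ Cs2r)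
    (κ κ' θ1 θ2 θr : ℝ)
    (hκ : κ = Cs1r / Cs2r) (hκ' : κ' = κ * (H12 / Rs1 - 1))
    (hden : 0 < (1 + κ') * Crd + (H12 / Rs1) * Cs1r - Cs1d - κ' * Cs2d)
    (hθ1 : θ1 = Crd / ((1 + κ') * Crd + (H12 / Rs1) * Cs1r - Cs1d - κ' * Cs2d))
    (hθ2 : θ2 = κ' * θ1) (hθr : θr = 1 - θ1 - θ2) :
    (1 / Rs1) * (θ1 * Cs1d + θr * Crd) ≥ (1 / Rs1) * θ1 * Cs1r := by
  have hH : 1 ≤ H12 / Rs1 := by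
    rw [le_div_iff₀ hRs1]; linarith
  have hkey : κ' * Cs2d ≤ (H12 / Rs1 - 1) * Cs1r := by
    rw [hκ', hκ, div_mul_eq_mul_div, div_mul_eq_mul_div, div_le_iff₀ h2]
    nlinarith [mul_nonneg (mul_nonneg (sub_nonneg.2 hH) h1.le) (sub_nonneg.2 hb)]
  have hθ1pos : 0 < θ1 := by rw [hθ1]; positivity
  have hD : θ1 * ((1 + κ') * Crd + (H12 / Rs1) * Cs1r - Cs1d - κ' * Cs2d) = Crd := by
    rw [hθ1, div_mul_cancel₀ _ (ne_of_gt hden)]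
  have hmain : θ1 * Cs1d + θr * Crd ≥ θ1 * Cs1r := by
    subst hθ2 hθr
    nlinarith [mul_nonneg hθ1pos.le (sub_nonneg.2 hkey), hD]
  have hRinv : (0:ℝ) ≤ 1 / Rs1 := by positivity
  calc (1 / Rs1) * θ1 * Cs1r = (1 / Rs1) * (θ1 * Cs1r) := by ring
    _ ≤ (1 / Rs1) * (θ1 * Cs1d + θr * Crd) := mul_le_mul_of_nonneg_left hmain hRinv
end

section
/- Let C_rd, C_s1r, C_s2r, C_s1d, C_s2d > 0, κ = C_s1r/C_s2r, H12 ∈ [1,2], and for Rs1 ∈ (0,1] define g(Rs1) = (1/Rs1)·θ1(Rs1)·C_s1r where θ1(Rs1) = C_rd/((1+κ'(Rs1))C_rd + (H12/Rs1)C_s1r − C_s1d − κ'(Rs1)C_s2d) and κ'(Rs1) = κ(H12/Rs1 − 1). Let α = (1−κ)C_rd − C_s1d + κC_s2d. Then: if α > 0, g is strictly decreasing on (0,1]; if α < 0, g is strictly increasing; if α = 0, g is constant. (Assume denominators remain positive on (0,1].) -/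
/-- Monotonicity of the achievable rate g(Rs1) according to the sign of
α = (1−κ)C_rd − C_s1d + κC_s2d. -/
theorem rate_monotonicity
    (Crd Cs1r Cs2r Cs1d Cs2d H12 : ℝ)
    (h1 : 0 < Cs1r) (h2 : 0 < Cs2r) (h3 : 0 < Cs1d) (h4 : 0 < Cs2d) (h5 : 0 < Crd)
    (hH1 : 1 ≤ H12) (hH2 : H12 ≤ 2)
    (κ α : ℝ) (hκ : κ = Cs1r / Cs2r)
    (hα : α = (1 - κ) * Crd - Cs1d + κ * Cs2d)
    (g : ℝ → ℝ)
    (hg : ∀ s, g s = (1 / s) *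
      (Crd / ((1 + κ * (H12 / s - 1)) * Crd + (H12 / s) * Cs1r - Cs1d
        - κ * (H12 / s - 1) * Cs2d)) * Cs1r)
    (hden : ∀ s ∈ Set.Ioc (0 : ℝ) 1,
      0 < (1 + κ * (H12 / s - 1)) * Crd + (H12 / s) * Cs1r - Cs1d
        - κ * (H12 / s - 1) * Cs2d) :
    (0 < α → StrictAntiOn g (Set.Ioc (0 : ℝ) 1))
      ∧ (α < 0 → StrictMonoOn g (Set.Ioc (0 : ℝ) 1))
      ∧ (α = 0 → ∀ s ∈ Set.Ioc (0 : ℝ) 1, ∀ t ∈ Set.Ioc (0 : ℝ) 1, g s = g t) := by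
  set β : ℝ := H12 * (κ * Crd + Cs1r - κ * Cs2d) with hβ
  -- key: on (0,1], g s = Cs1r * Crd / (s * α + β) and 0 < s * α + β
  have key : ∀ s ∈ Set.Ioc (0 : ℝ) 1,
      g s = Cs1r * Crd / (s * α + β) ∧ 0 < s * α + β := by
    intro s hs
    have hs0 : 0 < s := hs.1
    have hsne : s ≠ 0 := ne_of_gt hs0
    have hD := hden s hs
    have hlin : s * α + β =
        s * ((1 + κ * (H12 / s - 1)) * Crd + (H12 / s) * Cs1r - Cs1d
          - κ * (H12 / s - 1) * Cs2d) := by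
      rw [hα, hβ]; field_simp; ring
    have hpos : 0 < s * α + β := by
      rw [hlin]; exact mul_pos hs0 hD
    constructor
    · rw [hg s, hlin]
      have hDne := hD.ne'
      field_simp
    · exact hpos
  have numpos : 0 < Cs1r * Crd := mul_pos h1 h5
  refine ⟨?_, ?_, ?_⟩
  · intro ha s hs t ht hst
    obtain ⟨hgs, hps⟩ := key s hs
    obtain ⟨hgt, hpt⟩ := key t ht
    rw [hgs, hgt]
    apply div_lt_div_of_pos_left numpos hps
    nlinarith
  · intro ha s hs t ht hst
    obtain ⟨hgs, hps⟩ := key s hs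
    obtain ⟨hgt, hpt⟩ := key t ht
    rw [hgs, hgt]
    apply div_lt_div_of_pos_left numpos hpt
    nlinarith
  · intro ha s hs t ht
    obtain ⟨hgs, _⟩ := key s hs
    obtain ⟨hgt, _⟩ := key t ht
    rw [hgs, hgt, ha]; ring_nf
end
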